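/- For a star graph with E edges of lengths l₁,…,l_E summing to L, Neumann condition at the center and Dirichlet at the boundary vertices, the first eigenvalue k₁² satisfies k₁ ≥ π/(2L), with equality iff E = 1; i.e., the first positive zero of ∑ᵢ cot(k·lᵢ) (star secular function with α₀ = 0) is at least π/(2L). -/

import Mathlib

open Real Set

/-- `k² > 0` is an eigenvalue of the star graph with edge lengths `l`, Neumann
condition at the center and Dirichlet conditions at the boundary vertices, i.e. there
is a nontrivial eigenfunction. -/
def IsStarNeumannEigenvalue (E : ℕ) (l : Fin E → ℝ) (k : ℝ) : Prop :=
  ∃ f f' : Fin E → ℝ → ℝ, ∃ f₀ : ℝ,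
    (∀ i, ∀ x ∈ Icc 0 (l i), HasDerivAt (f i) (f' i x) x) ∧
    (∀ i, ∀ x ∈ Icc 0 (l i), HasDerivAt (f' i) (-(k ^ 2) * f i x) x) ∧
    (∀ i, f i (l i) = 0) ∧
    (∀ i, f i 0 = f₀) ∧
    (∑ i, f' i 0 = 0) ∧
    ¬∀ i, ∀ x ∈ Icc 0 (l i), f i x = 0

/-! On an edge, `k f(x) = k f(0) cos(kx) + f'(0) sin(kx)`, so the Dirichlet
condition gives `f'ᵢ(0) = -f₀ k cot(k lᵢ)`. If every `k lᵢ` lies in `(0, π/2)` all cotangents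
are positive, so the Neumann condition `∑ f'ᵢ(0) = 0` forces `f₀ = 0` and then `f ≡ 0`.
Since `lᵢ ≤ L`, with strict inequality as soon as `E ≥ 2`, this happens for `k < π/(2L)`, and
for `k = π/(2L)` unless `E = 1`; on a single edge `cos(πx/(2L))` is an eigenfunction. -/

/-- The Wronskian of `f` with `y ↦ sin (k (x - y))`, a solution vanishing at `x`, is constant
on `[0, x]`. -/
theorem mul_eq_cos_add_sin_of_hasDerivAt {k l : ℝ} {f f' : ℝ → ℝ}
    (hf : ∀ x ∈ Icc 0 l, HasDerivAt f (f' x) x)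
    (hf' : ∀ x ∈ Icc 0 l, HasDerivAt f' (-(k ^ 2) * f x) x) {x : ℝ} (hx : x ∈ Icc 0 l) :
    k * f x = k * f 0 * cos (k * x) + f' 0 * sin (k * x) := by
  set W : ℝ → ℝ := fun y => f y * (k * cos (k * (x - y))) + f' y * sin (k * (x - y))
  have hW : ∀ y ∈ Icc 0 x, HasDerivAt W 0 y := by
    intro y hy
    have hy' : y ∈ Icc 0 l := ⟨hy.1, hy.2.trans hx.2⟩
    have hlin : HasDerivAt (fun y => k * (x - y)) (k * (0 - 1)) y :=
      ((hasDerivAt_const y x).sub (hasDerivAt_id y)).const_mul k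
    exact (((hf y hy').mul (hlin.cos.const_mul k)).add ((hf' y hy').mul hlin.sin)).congr_deriv
      (by ring)
  have hWc : ContinuousOn W (Icc 0 x) := fun y hy => (hW y hy).continuousAt.continuousWithinAt
  have hconst := constant_of_has_deriv_right_zero hWc
    (fun y hy => (hW y (Ico_subset_Icc_self hy)).hasDerivWithinAt) x ⟨hx.1, le_rfl⟩
  simp only [W, sub_self, sub_zero, mul_zero, cos_zero, sin_zero] at hconst
  linear_combination hconst

theorem IsStarNeumannEigenvalue.pos_card {E : ℕ} {l : Fin E → ℝ} {k : ℝ}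
    (h : IsStarNeumannEigenvalue E l k) : 0 < E := by
  obtain ⟨_, _, _, _, _, _, _, _, hnt⟩ := h
  obtain ⟨i, -⟩ := not_forall.mp hnt
  exact i.pos

theorem not_isStarNeumannEigenvalue_of_forall_mul_lt {E : ℕ} {l : Fin E → ℝ} {k : ℝ}
    (hk : 0 < k) (hl : ∀ i, 0 < l i) (h : ∀ i, k * l i < π / 2) :
    ¬IsStarNeumannEigenvalue E l k := by
  rintro ⟨f, f', f₀, hf, hf', hfl, hf0, hsum, hnt⟩
  obtain ⟨i₀, -⟩ := not_forall.mp hnt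
  have hsin : ∀ i, 0 < sin (k * l i) := fun i =>
    sin_pos_of_pos_of_lt_pi (mul_pos hk (hl i)) ((h i).trans (by linarith [pi_pos]))
  have hcot : ∀ i, 0 < cos (k * l i) / sin (k * l i) := fun i =>
    div_pos (cos_pos_of_mem_Ioo ⟨by linarith [mul_pos hk (hl i), pi_pos], h i⟩) (hsin i)
  have hderiv : ∀ i, f' i 0 = -(f₀ * k) * (cos (k * l i) / sin (k * l i)) := by
    intro i
    have hdir := mul_eq_cos_add_sin_of_hasDerivAt (hf i) (hf' i) ⟨(hl i).le, le_rfl⟩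
    rw [hfl i, hf0 i] at hdir
    field_simp [(hsin i).ne']
    linarith
  have hf₀ : f₀ = 0 := by
    have hcot_sum : 0 < ∑ i, cos (k * l i) / sin (k * l i) :=
      Finset.sum_pos (fun i _ => hcot i) ⟨i₀, Finset.mem_univ _⟩
    simpa [hderiv, ← Finset.mul_sum, hk.ne', hcot_sum.ne'] using hsum
  refine hnt fun i x hx => ?_
  have hrep := mul_eq_cos_add_sin_of_hasDerivAt (hf i) (hf' i) hx
  simpa [hf0 i, hf₀, hderiv i, hk.ne'] using hrep

theorem isStarNeumannEigenvalue_one {L k : ℝ} (hL : 0 ≤ L) (hkL : k * L = π / 2) :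
    IsStarNeumannEigenvalue 1 (fun _ => L) k := by
  have hlin (x : ℝ) : HasDerivAt (fun x => k * x) k x := by
    simpa using (hasDerivAt_id x).const_mul k
  refine ⟨fun _ x => cos (k * x), fun _ x => -k * sin (k * x), 1,
    fun _ x _ => (hlin x).cos.congr_deriv (by ring),
    fun _ x _ => ((hlin x).sin.const_mul (-k)).congr_deriv (by ring),
    fun _ => by simp [hkL], fun _ => by simp, by simp, fun h => ?_⟩
  simpa using h 0 0 ⟨le_rfl, hL⟩

theorem star_graph_first_eigenvalue_bound_general (E : ℕ) (l : Fin E → ℝ)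
    (hl : ∀ i, 0 < l i) (L : ℝ) (hL : ∑ i, l i = L) :
    (∀ k : ℝ, 0 < k → IsStarNeumannEigenvalue E l k → π / (2 * L) ≤ k) ∧
    (IsStarNeumannEigenvalue E l (π / (2 * L)) ↔ E = 1) := by
  have hL_pos (hE_pos : 0 < E) : 0 < L :=
    hL ▸ Finset.sum_pos (fun i _ => hl i) ⟨⟨0, hE_pos⟩, Finset.mem_univ _⟩
  refine ⟨fun k hk heig => ?_, fun heig => ?_, ?_⟩
  · have hL0 := hL_pos heig.pos_card
    by_contra! hlt
    refine not_isStarNeumannEigenvalue_of_forall_mul_lt hk hl (fun i => ?_) heig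
    have hle : l i ≤ L := hL ▸ Finset.single_le_sum (fun j _ => (hl j).le) (Finset.mem_univ i)
    calc k * l i ≤ k * L := by gcongr
      _ < π / (2 * L) * L := by gcongr
      _ = π / 2 := by field_simp
  · have hL0 := hL_pos heig.pos_card
    by_contra hE1
    have : Nontrivial (Fin E) := Fin.nontrivial_iff_two_le.mpr (by have := heig.pos_card; omega)
    refine not_isStarNeumannEigenvalue_of_forall_mul_lt (by positivity) hl (fun i => ?_) heig
    obtain ⟨j, hji⟩ := exists_ne i
    have hlt : l i < L := hL ▸ Finset.single_lt_sum hji (Finset.mem_univ i) (Finset.mem_univ j)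
      (hl j) (fun j _ _ => (hl j).le)
    calc π / (2 * L) * l i < π / (2 * L) * L := by gcongr
      _ = π / 2 := by field_simp
  · rintro rfl
    have hl_const : l = fun _ => L := funext fun i => by simpa [Subsingleton.elim i 0] using hL
    subst hl_const
    exact isStarNeumannEigenvalue_one (hl 0).le (by field_simp [(hl 0).ne'])

/-- Among all star graphs of total length `L` (Neumann center, Dirichlet boundary),
the first eigenvalue satisfies `k₁ ≥ π/(2L)`, with equality attained precisely for the
single interval `E = 1`. -/
theorem star_graph_first_eigenvalue_bound (E : ℕ) (hE : 1 ≤ E) (l : Fin E → ℝ)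
    (hl : ∀ i, 0 < l i) (L : ℝ) (hL : ∑ i, l i = L) :
    (∀ k : ℝ, 0 < k → IsStarNeumannEigenvalue E l k → π / (2 * L) ≤ k) ∧
    (IsStarNeumannEigenvalue E l (π / (2 * L)) ↔ E = 1) :=
  star_graph_first_eigenvalue_bound_general E l hl L hL
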